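/- Let A be a positive semidefinite n×n complex matrix and let θ ∈ [−1, 0). Then the infimum, over all n×n positive definite density matrices σ, of Tr(σ^θ A) equals (Tr[A^{1/(1−θ)}])^{1−θ}. (This reverse-Hölder variational formula is the core of the infimum in the Araki–Masuda norms for 1 ≤ p < 2, as used in Lemma 2.3 of the paper.) -/

import Mathlib

open Matrix
open scoped ComplexOrder

/-- Real power of a matrix, defined via the spectral decomposition when the matrix is
Hermitian (applying the real power function to the eigenvalues), and `0` otherwise. -/
noncomputable def mpow {n : ℕ} (A : Matrix (Fin n) (Fin n) ℂ) (r : ℝ) :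
    Matrix (Fin n) (Fin n) ℂ :=
  if hA : A.IsHermitian then
    (hA.eigenvectorUnitary : Matrix (Fin n) (Fin n) ℂ) *
      Matrix.diagonal (fun i => ((hA.eigenvalues i ^ r : ℝ) : ℂ)) *
      (star hA.eigenvectorUnitary : Matrix (Fin n) (Fin n) ℂ)
  else 0

/-!
Diagonalize `A = ∑ aᵢ |wᵢ⟩⟨wᵢ|` and `σ = ∑ sⱼ |uⱼ⟩⟨uⱼ|`. Then `Tr(σ^θ A) = ∑ᵢⱼ aᵢ cᵢⱼ sⱼ^θ` with
`cᵢⱼ = |⟨wᵢ, uⱼ⟩|²` doubly stochastic, and Jensen's inequality for `x ↦ x ^ (1 - θ)` with weights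
`cᵢⱼ sⱼ` (summing to `Tr σ = 1`) at the points `aᵢ^(1/(1-θ)) / sⱼ` gives the lower bound
`(∑ aᵢ^(1/(1-θ)))^(1-θ)`. It is attained at `σ = A^(1/(1-θ)) / Tr A^(1/(1-θ))` when `A` is positive
definite; in general, adding `ε` to the eigenvalues of `A^(1/(1-θ))` gives positive definite
densities whose values tend to the bound as `ε → 0`.
-/

namespace Matrix

variable {ι 𝕜 : Type*} [Fintype ι] [DecidableEq ι] [RCLike 𝕜]

lemma sum_norm_sq_row_eq_one {X : Matrix ι ι 𝕜} (hX : X ∈ unitaryGroup ι 𝕜) (i : ι) :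
    ∑ j, ‖X i j‖ ^ 2 = 1 := by
  have h := congr_fun (congr_fun (mem_unitaryGroup_iff.mp hX) i) i
  simp only [mul_apply, star_apply, ← starRingEnd_apply, RCLike.mul_conj, one_apply_eq] at h
  exact_mod_cast h

lemma sum_norm_sq_col_eq_one {X : Matrix ι ι 𝕜} (hX : X ∈ unitaryGroup ι 𝕜) (j : ι) :
    ∑ i, ‖X i j‖ ^ 2 = 1 := by
  have h := congr_fun (congr_fun (mem_unitaryGroup_iff'.mp hX) j) j
  simp only [mul_apply, star_apply, ← starRingEnd_apply, RCLike.conj_mul, one_apply_eq] at h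
  exact_mod_cast h

lemma of_norm_sq_mem_doublyStochastic {X : Matrix ι ι 𝕜} (hX : X ∈ unitaryGroup ι 𝕜) :
    of (fun i j => ‖X i j‖ ^ 2) ∈ doublyStochastic ℝ ι :=
  mem_doublyStochastic_iff_sum.mpr
    ⟨fun _ _ => sq_nonneg _, sum_norm_sq_row_eq_one hX, sum_norm_sq_col_eq_one hX⟩

lemma trace_conj_diagonal_mul_conj_diagonal (U W : Matrix ι ι 𝕜) (v w : ι → ℝ) :
    (U * diagonal (RCLike.ofReal ∘ v) * star U *
        (W * diagonal (RCLike.ofReal ∘ w) * star W)).trace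
      = ∑ i, ∑ j, ((w i * ‖(star W * U) i j‖ ^ 2 * v j : ℝ) : 𝕜) := by
  set X := star W * U
  set Dv : Matrix ι ι 𝕜 := diagonal (RCLike.ofReal ∘ v)
  set Dw : Matrix ι ι 𝕜 := diagonal (RCLike.ofReal ∘ w)
  have hcycle : (U * Dv * star U * (W * Dw * star W)).trace = (Dv * (star X * Dw * X)).trace := by
    rw [show U * Dv * star U * (W * Dw * star W) = U * (Dv * star U * W * Dw * star W) by
      simp only [mul_assoc], trace_mul_comm]
    simp only [X, star_mul, star_star, mul_assoc]
  have hentry : ∀ j, (star X * Dw * X) j j = ∑ i, ((w i * ‖X i j‖ ^ 2 : ℝ) : 𝕜) := by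
    intro j
    rw [mul_apply]
    simp only [Dw, mul_diagonal, star_apply, ← starRingEnd_apply, Function.comp_apply]
    push_cast
    simp only [← RCLike.conj_mul]
    exact Finset.sum_congr rfl fun i _ => by ring
  rw [hcycle, trace]
  simp only [diag_apply, Dv, diagonal_mul, hentry, Finset.mul_sum, Function.comp_apply]
  rw [Finset.sum_comm]
  push_cast
  exact Finset.sum_congr rfl fun i _ => Finset.sum_congr rfl fun j _ => by ring

lemma IsHermitian.trace_cfc {A : Matrix ι ι 𝕜} (hA : A.IsHermitian) (f : ℝ → ℝ) :
    (cfc f A).trace = ∑ i, (f (hA.eigenvalues i) : 𝕜) := by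
  rw [hA.cfc_eq, IsHermitian.cfc, Unitary.conjStarAlgAut_apply, trace_mul_cycle,
    Unitary.coe_star_mul_self, one_mul, trace_diagonal]
  rfl

lemma IsHermitian.trace_cfc_mul_self {A : Matrix ι ι 𝕜} (hA : A.IsHermitian) (f : ℝ → ℝ) :
    (cfc f A * A).trace = ∑ i, (f (hA.eigenvalues i) * hA.eigenvalues i : 𝕜) := by
  have hcont : ∀ g : ℝ → ℝ, ContinuousOn g (spectrum ℝ A) :=
    fun g => A.finite_real_spectrum.continuousOn g
  have hmul : cfc f A * A = cfc (fun x => f x * x) A := by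
    rw [cfc_mul f _ A (hcont _) (hcont _), cfc_id' ℝ A hA.isSelfAdjoint]
  rw [hmul, hA.trace_cfc]
  push_cast
  rfl

lemma IsHermitian.posDef_cfc {A : Matrix ι ι 𝕜} (hA : A.IsHermitian) {g : ℝ → ℝ}
    (hg : ∀ i, 0 < g (hA.eigenvalues i)) : (cfc g A).PosDef := by
  rw [hA.cfc_eq, IsHermitian.cfc, Unitary.conjStarAlgAut_apply,
    Unitary.isUnit_coe.posDef_star_right_conjugate_iff, posDef_diagonal_iff]
  exact fun i => RCLike.ofReal_pos.mpr (hg i)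

end Matrix

lemma rpow_sum_rpow_le_sum_mul_doublyStochastic {ι : Type*} [Fintype ι] [DecidableEq ι]
    {θ : ℝ} (hθ : θ ≤ 0) {a s : ι → ℝ} (ha : ∀ i, 0 ≤ a i) (hs : ∀ j, 0 < s j)
    (hs_sum : ∑ j, s j = 1) {c : Matrix ι ι ℝ} (hc : c ∈ doublyStochastic ℝ ι) :
    (∑ i, a i ^ (1 / (1 - θ))) ^ (1 - θ) ≤ ∑ i, ∑ j, a i * c i j * s j ^ θ := by
  obtain ⟨hc_nonneg, hc_row, hc_col⟩ := mem_doublyStochastic_iff_sum.mp hc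
  have jensen := Real.rpow_arith_mean_le_arith_mean_rpow Finset.univ
    (fun x : ι × ι => c x.1 x.2 * s x.2) (fun x => a x.1 ^ (1 / (1 - θ)) / s x.2)
    (fun x _ => mul_nonneg (hc_nonneg _ _) (hs _).le)
    (by rw [Fintype.sum_prod_type, Finset.sum_comm]; simp [← Finset.sum_mul, hc_col, hs_sum])
    (fun x _ => div_nonneg (Real.rpow_nonneg (ha _) _) (hs _).le) (by linarith : 1 ≤ 1 - θ)
  have hmean : ∀ i j,
      c i j * s j * (a i ^ (1 / (1 - θ)) / s j) = c i j * a i ^ (1 / (1 - θ)) :=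
    fun i j => by field_simp [(hs j).ne']
  have hmean_pow : ∀ i j,
      c i j * s j * (a i ^ (1 / (1 - θ)) / s j) ^ (1 - θ) = a i * c i j * s j ^ θ := by
    intro i j
    have hs_pow := Real.rpow_sub (hs j) 1 (1 - θ)
    rw [sub_sub_cancel, Real.rpow_one] at hs_pow
    rw [Real.div_rpow (Real.rpow_nonneg (ha i) _) (hs j).le, one_div,
      Real.rpow_inv_rpow (ha i) (by linarith), hs_pow]
    ring
  simp only [Fintype.sum_prod_type, hmean, hmean_pow] at jensen
  simpa [← Finset.sum_mul, hc_row] using jensen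

lemma rpow_add_div_rpow_mul_le {a ε τ θ : ℝ} (ha : 0 ≤ a) (hε : 0 ≤ ε) (hτ : 0 < τ)
    (hθ : θ ≤ 0) : ((a ^ (1 / (1 - θ)) + ε) / τ) ^ θ * a ≤ a ^ (1 / (1 - θ)) * τ ^ (-θ) := by
  rcases ha.eq_or_lt with rfl | ha
  · rw [mul_zero, Real.zero_rpow (one_div_ne_zero (by linarith)), zero_mul]
  have hb : 0 < a ^ (1 / (1 - θ)) := Real.rpow_pos_of_pos ha _
  calc ((a ^ (1 / (1 - θ)) + ε) / τ) ^ θ * a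
      ≤ (a ^ (1 / (1 - θ)) / τ) ^ θ * a := by
        gcongr ?_ * a
        exact Real.rpow_le_rpow_of_nonpos (div_pos hb hτ) (by gcongr; linarith) hθ
    _ = a ^ (1 / (1 - θ) * θ + 1) * τ ^ (-θ) := by
        rw [Real.div_rpow hb.le hτ.le, ← Real.rpow_mul ha.le, Real.rpow_add ha, Real.rpow_one,
          Real.rpow_neg hτ.le]
        ring
    _ = a ^ (1 / (1 - θ)) * τ ^ (-θ) := by
        congr 2
        field_simp [show 1 - θ ≠ 0 by linarith]
        ring

lemma tendsto_mul_rpow_neg_add_mul {T c θ : ℝ} (hT : 0 ≤ T) (hθ : θ ≤ 0) :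
    Filter.Tendsto (fun ε => T * (T + c * ε) ^ (-θ)) (nhds 0) (nhds (T ^ (1 - θ))) := by
  have hcont : Continuous fun ε => T * (T + c * ε) ^ (-θ) :=
    continuous_const.mul
      ((Real.continuous_rpow_const (neg_nonneg.mpr hθ)).comp (by fun_prop))
  convert hcont.tendsto 0 using 2
  rw [mul_zero, add_zero, sub_eq_add_neg, Real.rpow_add' hT (by linarith), Real.rpow_one]

section mpow

variable {n : ℕ}

lemma mpow_eq_cfc {A : Matrix (Fin n) (Fin n) ℂ} (hA : A.IsHermitian) (r : ℝ) :
    mpow A r = cfc (fun x : ℝ => x ^ r) A := by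
  rw [hA.cfc_eq, mpow, dif_pos hA]
  rfl

lemma mpow_cfc {A : Matrix (Fin n) (Fin n) ℂ} (hA : A.IsHermitian) (g : ℝ → ℝ) (r : ℝ) :
    mpow (cfc g A) r = cfc (fun x => g x ^ r) A := by
  rw [mpow_eq_cfc (cfc_predicate g A),
    ← cfc_comp (fun x : ℝ => x ^ r) g A hA.isSelfAdjoint
      ((A.finite_real_spectrum.image g).continuousOn _) (A.finite_real_spectrum.continuousOn _)]
  rfl

lemma trace_mpow_mul {σ A : Matrix (Fin n) (Fin n) ℂ} (hσ : σ.IsHermitian) (hA : A.IsHermitian)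
    (θ : ℝ) : (mpow σ θ * A).trace = ∑ i, ∑ j, ((hA.eigenvalues i *
      ‖(star (hA.eigenvectorUnitary : Matrix (Fin n) (Fin n) ℂ) * hσ.eigenvectorUnitary) i j‖ ^ 2 *
        hσ.eigenvalues j ^ θ : ℝ) : ℂ) := by
  rw [mpow, dif_pos hσ]
  conv_lhs => rw [hA.spectral_theorem, Unitary.conjStarAlgAut_apply]
  exact trace_conj_diagonal_mul_conj_diagonal _ _ (hσ.eigenvalues · ^ θ) _

lemma re_trace_mpow {A : Matrix (Fin n) (Fin n) ℂ} (hA : A.IsHermitian) (r : ℝ) :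
    (mpow A r).trace.re = ∑ i, hA.eigenvalues i ^ r := by
  rw [mpow_eq_cfc hA, hA.trace_cfc, RCLike.ofReal_eq_complex_ofReal, Complex.re_sum]
  rfl

lemma rpow_re_trace_mpow_le_re_trace_mpow_mul {σ A : Matrix (Fin n) (Fin n) ℂ} (hσ : σ.PosDef)
    (hσ_tr : σ.trace = 1) (hA : A.PosSemidef) {θ : ℝ} (hθ : θ ≤ 0) :
    (mpow A (1 / (1 - θ))).trace.re ^ (1 - θ) ≤ (mpow σ θ * A).trace.re := by
  have hσ_sum : ∑ j, hσ.1.eigenvalues j = 1 := by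
    have := hσ.1.trace_eq_sum_eigenvalues.symm.trans hσ_tr
    rw [RCLike.ofReal_eq_complex_ofReal] at this
    exact_mod_cast this
  have hX : star (hA.1.eigenvectorUnitary : Matrix (Fin n) (Fin n) ℂ) * hσ.1.eigenvectorUnitary
      ∈ unitaryGroup (Fin n) ℂ :=
    (star hA.1.eigenvectorUnitary * hσ.1.eigenvectorUnitary).2
  rw [trace_mpow_mul hσ.1 hA.1, re_trace_mpow hA.1]
  simp only [Complex.re_sum, Complex.ofReal_re]
  exact rpow_sum_rpow_le_sum_mul_doublyStochastic hθ hA.eigenvalues_nonneg hσ.eigenvalues_pos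
    hσ_sum (of_norm_sq_mem_doublyStochastic hX)

lemma exists_posDef_re_trace_mpow_mul_le (hn : 0 < n) {A : Matrix (Fin n) (Fin n) ℂ}
    (hA : A.PosSemidef) {θ : ℝ} (hθ : θ ≤ 0) {ε : ℝ} (hε : 0 < ε) :
    ∃ σ : Matrix (Fin n) (Fin n) ℂ, σ.PosDef ∧ σ.trace = 1 ∧
      (mpow σ θ * A).trace.re ≤ (∑ i, hA.1.eigenvalues i ^ (1 / (1 - θ))) *
        ((∑ i, hA.1.eigenvalues i ^ (1 / (1 - θ))) + n * ε) ^ (-θ) := by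
  set a := hA.1.eigenvalues
  set T := ∑ i, a i ^ (1 / (1 - θ))
  have hτ : 0 < T + n * ε := add_pos_of_nonneg_of_pos
    (Finset.sum_nonneg fun i _ => Real.rpow_nonneg (hA.eigenvalues_nonneg i) _) (by positivity)
  let g : ℝ → ℝ := fun x => (x ^ (1 / (1 - θ)) + ε) / (T + n * ε)
  refine ⟨cfc g A, hA.1.posDef_cfc fun i => ?_, ?_, ?_⟩
  · exact div_pos (add_pos_of_nonneg_of_pos (Real.rpow_nonneg (hA.eigenvalues_nonneg i) _) hε) hτ
  · have hg_sum : ∑ i, g (a i) = 1 := by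
      simp only [g, ← Finset.sum_div, Finset.sum_add_distrib, Finset.sum_const, Finset.card_univ,
        Fintype.card_fin, nsmul_eq_mul]
      exact div_self hτ.ne'
    rw [hA.1.trace_cfc, RCLike.ofReal_eq_complex_ofReal, ← Complex.ofReal_sum, hg_sum,
      Complex.ofReal_one]
  · rw [mpow_cfc hA.1, hA.1.trace_cfc_mul_self, RCLike.ofReal_eq_complex_ofReal]
    simp only [← Complex.ofReal_mul, Complex.re_sum, Complex.ofReal_re]
    calc ∑ i, g (a i) ^ θ * a i ≤ ∑ i, a i ^ (1 / (1 - θ)) * (T + n * ε) ^ (-θ) :=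
          Finset.sum_le_sum fun i _ =>
            rpow_add_div_rpow_mul_le (hA.eigenvalues_nonneg i) hε.le hτ hθ
      _ = T * (T + n * ε) ^ (-θ) := (Finset.sum_mul ..).symm

lemma exists_posDef_re_trace_mpow_mul_lt (hn : 0 < n) {A : Matrix (Fin n) (Fin n) ℂ}
    (hA : A.PosSemidef) {θ : ℝ} (hθ : θ ≤ 0) {y : ℝ}
    (hy : (mpow A (1 / (1 - θ))).trace.re ^ (1 - θ) < y) :
    ∃ σ : Matrix (Fin n) (Fin n) ℂ, σ.PosDef ∧ σ.trace = 1 ∧ (mpow σ θ * A).trace.re < y := by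
  rw [re_trace_mpow hA.1] at hy
  have hT : 0 ≤ ∑ i, hA.1.eigenvalues i ^ (1 / (1 - θ)) :=
    Finset.sum_nonneg fun i _ => Real.rpow_nonneg (hA.eigenvalues_nonneg i) _
  obtain ⟨ε, hε, hε_lt⟩ :=
    ((tendsto_mul_rpow_neg_add_mul hT hθ (c := n)).eventually_lt_const hy).exists_gt
  obtain ⟨σ, hσ, hσ_tr, hle⟩ := exists_posDef_re_trace_mpow_mul_le hn hA hθ hε
  exact ⟨σ, hσ, hσ_tr, hle.trans_lt hε_lt⟩

end mpow

theorem holder_variational_inf_general {n : ℕ}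
    (A : Matrix (Fin n) (Fin n) ℂ) (hA : A.PosSemidef)
    (θ : ℝ) (hθ₂ : θ < 0) :
    sInf {x : ℝ | ∃ σ : Matrix (Fin n) (Fin n) ℂ, σ.PosDef ∧ σ.trace = 1 ∧
        x = (Matrix.trace (mpow σ θ * A)).re} =
      ((Matrix.trace (mpow A (1 / (1 - θ)))).re) ^ (1 - θ) := by
  rcases Nat.eq_zero_or_pos n with rfl | hn
  · simp [Matrix.trace, Real.zero_rpow (by linarith : 1 - θ ≠ 0)]
  set S := {x : ℝ | ∃ σ : Matrix (Fin n) (Fin n) ℂ, σ.PosDef ∧ σ.trace = 1 ∧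
    x = (Matrix.trace (mpow σ θ * A)).re}
  have h_lower : ∀ x ∈ S, (mpow A (1 / (1 - θ))).trace.re ^ (1 - θ) ≤ x := by
    rintro _ ⟨σ, hσ, hσ_tr, rfl⟩
    exact rpow_re_trace_mpow_le_re_trace_mpow_mul hσ hσ_tr hA hθ₂.le
  obtain ⟨σ₁, hσ₁, hσ₁_tr, -⟩ := exists_posDef_re_trace_mpow_mul_lt hn hA hθ₂.le (lt_add_one _)
  refine le_antisymm (le_of_forall_gt fun y hy => ?_) (le_csInf ⟨_, σ₁, hσ₁, hσ₁_tr, rfl⟩ h_lower)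
  obtain ⟨σ, hσ, hσ_tr, hσ_lt⟩ := exists_posDef_re_trace_mpow_mul_lt hn hA hθ₂.le hy
  exact (csInf_le ⟨_, h_lower⟩ ⟨σ, hσ, hσ_tr, rfl⟩).trans_lt hσ_lt

theorem holder_variational_inf {n : ℕ}
    (A : Matrix (Fin n) (Fin n) ℂ) (hA : A.PosSemidef)
    (θ : ℝ) (hθ₁ : -1 ≤ θ) (hθ₂ : θ < 0) :
    sInf {x : ℝ | ∃ σ : Matrix (Fin n) (Fin n) ℂ, σ.PosDef ∧ σ.trace = 1 ∧
        x = (Matrix.trace (mpow σ θ * A)).re} =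
      ((Matrix.trace (mpow A (1 / (1 - θ)))).re) ^ (1 - θ) :=
  holder_variational_inf_general A hA θ hθ₂
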